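/- In the octonion algebra V over a field F of char ≠ 2, let h, h' be isotropic vectors orthogonal to 1 with f(h,h') = 1, and set e⁺ = -hh', e⁻ = -h'h, c = e⁺ - e⁻. Then c·h = h, c·h' = -h', Q(h+h') = 1, Q(h-h') = -1, c = (h+h')(h-h'), and F·1 ⊕ F·c is a 2-dimensional split composition subalgebra of V orthogonal to the plane Fh ⊕ Fh', and (F·1 ⊕ F·c) ⊕ Fh ⊕ Fh' is a 4-dimensional composition subalgebra. -/
import Mathlib


open QuadraticMap

/-- A composition algebra structure on `V` over `F`: a (not necessarily associative)
unital bilinear multiplication together with a multiplicative quadratic form whose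
polar bilinear form is nondegenerate. -/
structure CompAlg (F : Type*) [Field F] (V : Type*) [AddCommGroup V] [Module F V] where
  Q : QuadraticForm F V
  mul : V → V → V
  one : V
  mul_add_left : ∀ x y z : V, mul (x + y) z = mul x z + mul y z
  mul_add_right : ∀ x y z : V, mul x (y + z) = mul x y + mul x z
  mul_smul_left : ∀ (a : F) (x y : V), mul (a • x) y = a • mul x y
  mul_smul_right : ∀ (a : F) (x y : V), mul x (a • y) = a • mul x y
  one_mul : ∀ x : V, mul one x = x
  mul_one : ∀ x : V, mul x one = x
  norm_mul : ∀ x y : V, Q (mul x y) = Q x * Q y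
  nondeg : ∀ x : V, (∀ y : V, polar (⇑Q) y x = 0) → x = 0

namespace CompAlg

variable {F : Type*} [Field F] {V : Type*} [AddCommGroup V] [Module F V]

/-- The associated bilinear form `f(x,y) = Q(x+y) - Q(x) - Q(y)`. -/
def f (A : CompAlg F V) (x y : V) : F := A.Q (x + y) - A.Q x - A.Q y

/-- Conjugation `x̄ = f(x,1)·1 - x`. -/
def conj (A : CompAlg F V) (x : V) : V := A.f x A.one • A.one - x

end CompAlg


namespace CompAlg

variable {F : Type*} [Field F] {V : Type*} [AddCommGroup V] [Module F V]

variable (A : CompAlg F V)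

theorem f_polar (x y : V) : A.f x y = polar (⇑A.Q) x y := rfl

theorem f_comm (x y : V) : A.f x y = A.f y x := by
  rw [f_polar, f_polar, polar_comm]

theorem f_add_left (x x' y : V) : A.f (x + x') y = A.f x y + A.f x' y := by
  simp only [f_polar]; exact polar_add_left A.Q x x' y

theorem f_add_right (x y y' : V) : A.f x (y + y') = A.f x y + A.f x y' := by
  simp only [f_polar]; exact polar_add_right A.Q x y y'

theorem f_smul_left (a : F) (x y : V) : A.f (a • x) y = a * A.f x y := by
  simp only [f_polar]; rw [polar_smul_left A.Q a x y]; simp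

theorem f_smul_right (a : F) (x y : V) : A.f x (a • y) = a * A.f x y := by
  simp only [f_polar]; rw [polar_smul_right A.Q a x y]; simp

theorem f_zero_left (y : V) : A.f 0 y = 0 := by
  simp only [f_polar]; simp [polar]

theorem f_zero_right (x : V) : A.f x 0 = 0 := by
  simp only [f_polar]; simp [polar]

theorem f_neg_left (x y : V) : A.f (-x) y = -A.f x y := by
  simp only [f_polar]; rw [polar_neg_left A.Q x y]

theorem f_neg_right (x y : V) : A.f x (-y) = -A.f x y := by
  simp only [f_polar]; rw [polar_neg_right A.Q x y]

theorem f_sub_left (x x' y : V) : A.f (x - x') y = A.f x y - A.f x' y := by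
  simp only [f_polar]; rw [polar_sub_left A.Q x x' y]

theorem f_sub_right (x y y' : V) : A.f x (y - y') = A.f x y - A.f x y' := by
  simp only [f_polar]; rw [polar_sub_right A.Q x y y']

theorem f_self (x : V) : A.f x x = 2 * A.Q x := by
  rw [f_polar, polar_self A.Q x]; push_cast [two_smul]; ring

theorem mul_zero_left (y : V) : A.mul 0 y = 0 := by
  have := A.mul_smul_left 0 0 y; simpa using this

theorem mul_zero_right (x : V) : A.mul x 0 = 0 := by
  have := A.mul_smul_right 0 x 0; simpa using this

theorem mul_neg_left (x y : V) : A.mul (-x) y = -A.mul x y := by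
  have := A.mul_smul_left (-1) x y; simpa using this

theorem mul_neg_right (x y : V) : A.mul x (-y) = -A.mul x y := by
  have := A.mul_smul_right (-1) x y; simpa using this

theorem mul_sub_left (x x' y : V) : A.mul (x - x') y = A.mul x y - A.mul x' y := by
  rw [sub_eq_add_neg, A.mul_add_left, mul_neg_left, sub_eq_add_neg]

theorem mul_sub_right (x y y' : V) : A.mul x (y - y') = A.mul x y - A.mul x y' := by
  rw [sub_eq_add_neg, A.mul_add_right, mul_neg_right, sub_eq_add_neg]

/-- `f(xz, yz) = f(x,y) Q(z)`. -/
theorem L1 (x y z : V) : A.f (A.mul x z) (A.mul y z) = A.f x y * A.Q z := by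
  simp only [CompAlg.f]
  rw [← A.mul_add_left, A.norm_mul, A.norm_mul, A.norm_mul]
  ring

/-- `f(xy, xz) = Q(x) f(y,z)`. -/
theorem L2 (x y z : V) : A.f (A.mul x y) (A.mul x z) = A.Q x * A.f y z := by
  simp only [CompAlg.f]
  rw [← A.mul_add_right, A.norm_mul, A.norm_mul, A.norm_mul]
  ring

/-- Four-variable identity. -/
theorem L3 (x y z w : V) :
    A.f (A.mul x y) (A.mul z w) + A.f (A.mul z y) (A.mul x w) = A.f x z * A.f y w := by
  have key := A.L2 (x + z) y w
  rw [A.mul_add_left, A.mul_add_left, A.f_add_left, A.f_add_right, A.f_add_right,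
    A.L2 x y w, A.L2 z y w] at key
  have hq : A.Q (x + z) = A.Q x + A.Q z + A.f x z := by
    simp only [CompAlg.f]; ring
  rw [hq] at key
  linear_combination key

/-- `f(xy, z) + f(zy, x) = f(x,z) f(y,1)`. -/
theorem L4 (x y z : V) : A.f (A.mul x y) z + A.f (A.mul z y) x = A.f x z * A.f y A.one := by
  have := A.L3 x y z A.one
  rwa [A.mul_one, A.mul_one] at this

/-- `f(y, zw) + f(zy, w) = f(1,z) f(y,w)`. -/
theorem L4' (y z w : V) : A.f y (A.mul z w) + A.f (A.mul z y) w = A.f A.one z * A.f y w := by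
  have := A.L3 A.one y z w
  rwa [A.one_mul, A.one_mul] at this

/-- `f(x̄ a, w) = f(a, xw)`. -/
theorem conj_mul_f (x a w : V) : A.f (A.mul (A.conj x) a) w = A.f a (A.mul x w) := by
  unfold conj
  rw [A.mul_sub_left, A.mul_smul_left, A.one_mul, A.f_sub_left, A.f_smul_left]
  have := A.L4' a x w
  have hc : A.f x A.one = A.f A.one x := A.f_comm x A.one
  linear_combination -this + A.f a w * hc

/-- `f(a x̄, w) = f(a, wx)`. -/
theorem mul_conj_f (x a w : V) : A.f (A.mul a (A.conj x)) w = A.f a (A.mul w x) := by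
  unfold conj
  rw [A.mul_sub_right, A.mul_smul_right, A.mul_one, A.f_sub_left, A.f_smul_left]
  have := A.L4 a x w
  have hc : A.f (A.mul w x) a = A.f a (A.mul w x) := A.f_comm _ _
  linear_combination -this + hc

/-- Square identity: `x² = f(x,1) x - Q(x) 1`. -/
theorem square (x : V) : A.mul x x = A.f x A.one • x - A.Q x • A.one := by
  have key : ∀ y : V, polar (⇑A.Q) y (A.mul x x - (A.f x A.one • x - A.Q x • A.one)) = 0 := by
    intro y
    rw [← f_polar, A.f_sub_right, A.f_sub_right, A.f_smul_right, A.f_smul_right]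
    have h1 := A.L4 x x y
    have h2 : A.f (A.mul y x) x = A.f y A.one * A.Q x := by
      have := A.L1 y A.one x
      rwa [A.one_mul] at this
    have hc1 : A.f (A.mul x x) y = A.f y (A.mul x x) := A.f_comm _ _
    have hc3 : A.f x y = A.f y x := A.f_comm _ _
    linear_combination -hc1 + h1 - h2 + A.f x A.one * hc3
  exact sub_eq_zero.mp (A.nondeg _ key)

/-- `x̄(zy) + z̄(xy) = f(x,z) y`. -/
theorem Lmul (x z y : V) :
    A.mul (A.conj x) (A.mul z y) + A.mul (A.conj z) (A.mul x y) = A.f x z • y := by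
  have key : ∀ w : V,
      polar (⇑A.Q) w (A.mul (A.conj x) (A.mul z y) + A.mul (A.conj z) (A.mul x y)
        - A.f x z • y) = 0 := by
    intro w
    rw [← f_polar, A.f_sub_right, A.f_add_right, A.f_smul_right]
    have h1 : A.f w (A.mul (A.conj x) (A.mul z y)) = A.f (A.mul z y) (A.mul x w) := by
      rw [A.f_comm]; exact A.conj_mul_f x (A.mul z y) w
    have h2 : A.f w (A.mul (A.conj z) (A.mul x y)) = A.f (A.mul x y) (A.mul z w) := by
      rw [A.f_comm]; exact A.conj_mul_f z (A.mul x y) w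
    have h3 := A.L3 x y z w
    have hc : A.f w y = A.f y w := A.f_comm _ _
    rw [h1, h2, hc]
    linear_combination h3
  exact sub_eq_zero.mp (A.nondeg _ key)

/-- `(yx)z̄ + (yz)x̄ = f(x,z) y`. -/
theorem Rmul (x z y : V) :
    A.mul (A.mul y x) (A.conj z) + A.mul (A.mul y z) (A.conj x) = A.f x z • y := by
  have key : ∀ w : V,
      polar (⇑A.Q) w (A.mul (A.mul y x) (A.conj z) + A.mul (A.mul y z) (A.conj x)
        - A.f x z • y) = 0 := by
    intro w
    rw [← f_polar, A.f_sub_right, A.f_add_right, A.f_smul_right]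
    have h1 : A.f w (A.mul (A.mul y x) (A.conj z)) = A.f (A.mul y x) (A.mul w z) := by
      rw [A.f_comm]; exact A.mul_conj_f z (A.mul y x) w
    have h2 : A.f w (A.mul (A.mul y z) (A.conj x)) = A.f (A.mul y z) (A.mul w x) := by
      rw [A.f_comm]; exact A.mul_conj_f x (A.mul y z) w
    have h3 := A.L3 y x w z
    have h4 := A.L3 y z w x
    have hc : A.f w y = A.f y w := A.f_comm _ _
    have hc2 : A.f (A.mul w x) (A.mul y z) = A.f (A.mul y z) (A.mul w x) := A.f_comm _ _
    have hc3 : A.f (A.mul w z) (A.mul y x) = A.f (A.mul y x) (A.mul w z) := A.f_comm _ _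
    have hc4 : A.f x z = A.f z x := A.f_comm _ _
    rw [h1, h2, hc]
    linear_combination h3 - hc2
  exact sub_eq_zero.mp (A.nondeg _ key)

end CompAlg

/-- for isotropic `h, h'` orthogonal to `1` with `f(h,h') = 1` in the
octonion algebra, setting `e⁺ = -hh'`, `e⁻ = -h'h` and `c = e⁺ - e⁻`:
`ch = h`, `ch' = -h'`, `Q(h+h') = 1`, `Q(h-h') = -1`, `c = (h+h')(h-h')`;
`F·1 ⊕ F·c` is a 2-dimensional split composition subalgebra orthogonal to
`Fh ⊕ Fh'`, and `F·1 ⊕ F·c ⊕ Fh ⊕ Fh'` is a 4-dimensional composition subalgebra. -/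
theorem stmt19 {F : Type*} [Field F] {V : Type*} [AddCommGroup V] [Module F V]
    (A : CompAlg F V) (h2 : (2 : F) ≠ 0)
    (h h' : V) (hQh : A.Q h = 0) (hQh' : A.Q h' = 0)
    (hh1 : A.f h A.one = 0) (hh'1 : A.f h' A.one = 0)
    (hpair : A.f h h' = 1) :
    (-(A.mul h h')) - (-(A.mul h' h)) = A.mul (h + h') (h - h') ∧
    A.mul (A.mul (h + h') (h - h')) h = h ∧
    A.mul (A.mul (h + h') (h - h')) h' = -h' ∧
    A.Q (h + h') = 1 ∧
    A.Q (h - h') = -1 ∧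
    -- `F·1 ⊕ F·c` is a split 2-dimensional composition subalgebra:
    A.mul (A.mul (h + h') (h - h')) (A.mul (h + h') (h - h')) = A.one ∧
    A.Q (A.mul (h + h') (h - h')) = -1 ∧
    A.f (A.mul (h + h') (h - h')) A.one = 0 ∧
    -- ... orthogonal to `Fh ⊕ Fh'`:
    A.f (A.mul (h + h') (h - h')) h = 0 ∧
    A.f (A.mul (h + h') (h - h')) h' = 0 ∧
    -- four-dimensionality and multiplicative closedness of the sum:
    LinearIndependent F ![A.one, A.mul (h + h') (h - h'), h, h'] ∧
    (∀ x ∈ Submodule.span F {A.one, A.mul (h + h') (h - h'), h, h'},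
      ∀ y ∈ Submodule.span F {A.one, A.mul (h + h') (h - h'), h, h'},
        A.mul x y ∈ Submodule.span F {A.one, A.mul (h + h') (h - h'), h, h'}) := by
  -- Q(1) = 1
  have hQ11 : A.Q A.one = A.Q A.one * A.Q A.one := by
    have := A.norm_mul A.one A.one; rwa [A.mul_one] at this
  have hQ1 : A.Q A.one = 1 := by
    by_contra hne
    have hfact : A.Q A.one * (A.Q A.one - 1) = 0 := by linear_combination -hQ11
    have h0 : A.Q A.one = 0 := by
      rcases mul_eq_zero.mp hfact with h0 | h0
      · exact h0
      · exact absurd (by linear_combination h0) hne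
    have hz : ∀ y : V, A.Q y = 0 := fun y => by
      have := A.norm_mul y A.one; rwa [A.mul_one, h0, mul_zero] at this
    have hz' : A.f h h' = 0 := by
      simp only [CompAlg.f]; rw [hz, hz, hz]; ring
    rw [hpair] at hz'; exact one_ne_zero hz'
  -- basic facts
  have Qsum : A.Q (h + h') = 1 := by
    have := hpair; simp only [CompAlg.f] at this
    linear_combination this + hQh + hQh'
  have Qdiff : A.Q (h - h') = -1 := by
    have e1 : A.f h (-h') = -1 := by rw [A.f_neg_right, hpair]
    have e2 : A.Q (-h') = 0 := by rw [A.Q.map_neg, hQh']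
    have e3 : h - h' = h + -h' := sub_eq_add_neg h h'
    simp only [CompAlg.f] at e1
    rw [e3]; rw [e2] at e1; linear_combination e1 + hQh
  have hsq : A.mul h h = 0 := by rw [A.square, hQh, hh1]; simp
  have hsq' : A.mul h' h' = 0 := by rw [A.square, hQh', hh'1]; simp
  have conj_h : A.conj h = -h := by simp only [CompAlg.conj]; rw [hh1]; simp
  have conj_h' : A.conj h' = -h' := by simp only [CompAlg.conj]; rw [hh'1]; simp
  have hfc : A.f h' h = 1 := by rw [A.f_comm, hpair]
  have hcEq : A.mul (h + h') (h - h') = A.mul h' h - A.mul h h' := by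
    rw [A.mul_add_left, A.mul_sub_right, A.mul_sub_right, hsq, hsq']; abel
  -- products
  have P2 : A.mul (A.mul h h') h = -h := by
    have t := A.Rmul h' h h
    rw [conj_h, conj_h', hsq, A.mul_zero_left, A.mul_neg_right, hfc, one_smul, add_zero] at t
    exact neg_eq_iff_eq_neg.mp t
  have P3 : A.mul (A.mul h' h) h = 0 := by
    have t := A.Rmul h h h'
    rw [conj_h, A.mul_neg_right, A.f_self, hQh, mul_zero, zero_smul, ← neg_add] at t
    have hsum := neg_eq_zero.mp t
    rw [← two_smul F] at hsum
    exact (smul_eq_zero.mp hsum).resolve_left h2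
  have P4 : A.mul (A.mul h h') h' = 0 := by
    have t := A.Rmul h' h' h
    rw [conj_h', A.mul_neg_right, A.f_self, hQh', mul_zero, zero_smul, ← neg_add] at t
    have hsum := neg_eq_zero.mp t
    rw [← two_smul F] at hsum
    exact (smul_eq_zero.mp hsum).resolve_left h2
  have P5 : A.mul (A.mul h' h) h' = -h' := by
    have t := A.Rmul h h' h'
    rw [conj_h, conj_h', hsq', A.mul_zero_left, A.mul_neg_right, hpair, one_smul, add_zero] at t
    exact neg_eq_iff_eq_neg.mp t
  have P6 : A.mul h (A.mul h h') = 0 := by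
    have t := A.Lmul h h h'
    rw [conj_h, A.mul_neg_left, A.f_self, hQh, mul_zero, zero_smul, ← neg_add] at t
    have hsum := neg_eq_zero.mp t
    rw [← two_smul F] at hsum
    exact (smul_eq_zero.mp hsum).resolve_left h2
  have P7 : A.mul h (A.mul h' h) = -h := by
    have t := A.Lmul h' h h
    rw [conj_h, conj_h', hsq, A.mul_zero_right, A.mul_neg_left, hfc, one_smul, zero_add] at t
    exact neg_eq_iff_eq_neg.mp t
  have P8 : A.mul h' (A.mul h' h) = 0 := by
    have t := A.Lmul h' h' h
    rw [conj_h', A.mul_neg_left, A.f_self, hQh', mul_zero, zero_smul, ← neg_add] at t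
    have hsum := neg_eq_zero.mp t
    rw [← two_smul F] at hsum
    exact (smul_eq_zero.mp hsum).resolve_left h2
  have P9 : A.mul h' (A.mul h h') = -h' := by
    have t := A.Lmul h h' h'
    rw [conj_h, conj_h', hsq', A.mul_zero_right, A.mul_neg_left, hpair, one_smul, zero_add] at t
    exact neg_eq_iff_eq_neg.mp t
  have P10 : A.mul h h' + A.mul h' h = -A.one := by
    have t := A.square (h + h')
    rw [A.mul_add_left, A.mul_add_right, A.mul_add_right, hsq, hsq', A.f_add_left,
      hh1, hh'1, Qsum] at t
    simpa using t
  -- f-values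
  have fe1 : A.f (A.mul h h') A.one = -1 := by
    have t := A.L4 h h' A.one
    rw [A.one_mul, hh1, zero_mul, hfc] at t; linear_combination t
  have fe'1 : A.f (A.mul h' h) A.one = -1 := by
    have t := A.L4 h' h A.one
    rw [A.one_mul, hh'1, zero_mul, hpair] at t; linear_combination t
  have feh : A.f (A.mul h h') h = 0 := by
    have t := A.L4 h h' h
    rw [A.f_self, hQh, mul_zero, zero_mul] at t
    have : (2 : F) * A.f (A.mul h h') h = 0 := by linear_combination t
    exact (mul_eq_zero.mp this).resolve_left h2
  have fe'h : A.f (A.mul h' h) h = 0 := by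
    have t := A.L4 h' h h
    rw [hsq, A.f_zero_left, hh1, mul_zero] at t; linear_combination t
  have feh' : A.f (A.mul h h') h' = 0 := by
    have t := A.L4 h h' h'
    rw [hsq', A.f_zero_left, hh'1, mul_zero] at t; linear_combination t
  have fe'h' : A.f (A.mul h' h) h' = 0 := by
    have t := A.L4 h' h h'
    rw [A.f_self, hQh', mul_zero, zero_mul] at t
    have : (2 : F) * A.f (A.mul h' h) h' = 0 := by linear_combination t
    exact (mul_eq_zero.mp this).resolve_left h2
  -- c facts
  have hc1 : A.f (A.mul (h + h') (h - h')) A.one = 0 := by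
    rw [hcEq, A.f_sub_left, fe'1, fe1]; ring
  have hch : A.f (A.mul (h + h') (h - h')) h = 0 := by
    rw [hcEq, A.f_sub_left, fe'h, feh]; ring
  have hch' : A.f (A.mul (h + h') (h - h')) h' = 0 := by
    rw [hcEq, A.f_sub_left, fe'h', feh']; ring
  have Qc : A.Q (A.mul (h + h') (h - h')) = -1 := by
    rw [A.norm_mul, Qsum, Qdiff]; ring
  have ccc : A.mul (A.mul (h + h') (h - h')) (A.mul (h + h') (h - h')) = A.one := by
    rw [A.square, hc1, Qc]; simp
  have mulch : A.mul (A.mul (h + h') (h - h')) h = h := by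
    rw [hcEq, A.mul_sub_left, P3, P2]; simp
  have mulch' : A.mul (A.mul (h + h') (h - h')) h' = -h' := by
    rw [hcEq, A.mul_sub_left, P5, P4]; simp
  have mulhc : A.mul h (A.mul (h + h') (h - h')) = -h := by
    rw [hcEq, A.mul_sub_right, P7, P6]; simp
  have mulh'c : A.mul h' (A.mul (h + h') (h - h')) = h' := by
    rw [hcEq, A.mul_sub_right, P8, P9]; simp
  refine ⟨by rw [hcEq]; abel, mulch, mulch', Qsum, Qdiff, ccc, Qc, hc1, hch, hch', ?_, ?_⟩
  · -- linear independence
    rw [Fintype.linearIndependent_iff]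
    intro g hg
    simp only [Fin.sum_univ_four, Matrix.cons_val_zero, Matrix.cons_val_one, Matrix.head_cons,
      Matrix.cons_val_two, Matrix.tail_cons, Matrix.cons_val_three] at hg
    have pair : ∀ w : V,
        g 0 * A.f A.one w + g 1 * A.f (A.mul (h + h') (h - h')) w + g 2 * A.f h w
          + g 3 * A.f h' w = 0 := by
      intro w
      have t : A.f (g 0 • A.one + g 1 • A.mul (h + h') (h - h') + g 2 • h + g 3 • h') w = 0 := by
        rw [hg, A.f_zero_left]
      simp only [A.f_add_left, A.f_smul_left] at t
      linear_combination t
    have t1 := pair A.one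
    rw [A.f_self, hQ1, hc1, hh1, hh'1] at t1
    have hg0 : g 0 = 0 := by
      have : (2 : F) * g 0 = 0 := by linear_combination t1
      exact (mul_eq_zero.mp this).resolve_left h2
    have t2 := pair (A.mul (h + h') (h - h'))
    rw [show A.f A.one (A.mul (h + h') (h - h')) = 0 from by rw [A.f_comm]; exact hc1,
      A.f_self, Qc,
      show A.f h (A.mul (h + h') (h - h')) = 0 from by rw [A.f_comm]; exact hch,
      show A.f h' (A.mul (h + h') (h - h')) = 0 from by rw [A.f_comm]; exact hch'] at t2
    have hg1 : g 1 = 0 := by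
      have : (2 : F) * g 1 = 0 := by linear_combination -t2
      exact (mul_eq_zero.mp this).resolve_left h2
    have t3 := pair h'
    rw [show A.f A.one h' = 0 from by rw [A.f_comm]; exact hh'1, hch', hpair,
      A.f_self, hQh'] at t3
    have hg2 : g 2 = 0 := by rw [hg0, hg1] at t3; simpa using t3
    have t4 := pair h
    rw [show A.f A.one h = 0 from by rw [A.f_comm]; exact hh1, hch, A.f_self, hQh, hfc] at t4
    have hg3 : g 3 = 0 := by rw [hg0, hg1, hg2] at t4; simpa using t4
    intro i; fin_cases i <;> assumption
  · -- multiplicative closedness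
    intro x hx y hy
    refine Submodule.span_induction₂
      (p := fun a b _ _ => A.mul a b ∈
        Submodule.span F ({A.one, A.mul (h + h') (h - h'), h, h'} : Set V))
      ?_ ?_ ?_ ?_ ?_ ?_ ?_ hx hy
    · intro a b ha hb
      have mem1 : A.one ∈ Submodule.span F ({A.one, A.mul (h + h') (h - h'), h, h'} : Set V) :=
        Submodule.subset_span (by simp)
      have memc : A.mul (h + h') (h - h') ∈
          Submodule.span F ({A.one, A.mul (h + h') (h - h'), h, h'} : Set V) :=
        Submodule.subset_span (by simp)
      have memh : h ∈ Submodule.span F ({A.one, A.mul (h + h') (h - h'), h, h'} : Set V) :=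
        Submodule.subset_span (by simp)
      have memh' : h' ∈ Submodule.span F ({A.one, A.mul (h + h') (h - h'), h, h'} : Set V) :=
        Submodule.subset_span (by simp)
      have keyE : A.mul h h' + A.mul h h' = -A.one - A.mul (h + h') (h - h') := by
        rw [hcEq, ← P10]; abel
      have heme : A.mul h h' ∈
          Submodule.span F ({A.one, A.mul (h + h') (h - h'), h, h'} : Set V) := by
        have h2e : A.mul h h' = (2⁻¹ : F) • (A.mul h h' + A.mul h h') := by
          rw [← two_smul F, smul_smul, inv_mul_cancel₀ h2, one_smul]
        rw [h2e, keyE]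
        exact Submodule.smul_mem _ _ (sub_mem (neg_mem mem1) memc)
      have heme' : A.mul h' h ∈
          Submodule.span F ({A.one, A.mul (h + h') (h - h'), h, h'} : Set V) := by
        have : A.mul h' h = A.mul (h + h') (h - h') + A.mul h h' := by rw [hcEq]; abel
        rw [this]; exact add_mem memc heme
      simp only [Set.mem_insert_iff, Set.mem_singleton_iff] at ha
      rcases ha with rfl | rfl | rfl | rfl
      · rw [A.one_mul]; exact Submodule.subset_span hb
      · simp only [Set.mem_insert_iff, Set.mem_singleton_iff] at hb
        rcases hb with rfl | rfl | rfl | rfl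
        · rw [A.mul_one]; exact memc
        · rw [ccc]; exact mem1
        · rw [mulch]; exact memh
        · rw [mulch']; exact neg_mem memh'
      · simp only [Set.mem_insert_iff, Set.mem_singleton_iff] at hb
        rcases hb with rfl | rfl | rfl | rfl
        · rw [A.mul_one]; exact memh
        · rw [mulhc]; exact neg_mem memh
        · rw [hsq]; exact zero_mem _
        · exact heme
      · simp only [Set.mem_insert_iff, Set.mem_singleton_iff] at hb
        rcases hb with rfl | rfl | rfl | rfl
        · rw [A.mul_one]; exact memh'
        · rw [mulh'c]; exact memh'
        · exact heme'
        · rw [hsq']; exact zero_mem _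
    · intro y hy; rw [A.mul_zero_left]; exact zero_mem _
    · intro x hx; rw [A.mul_zero_right]; exact zero_mem _
    · intro a b z ha hb hz p1 p2; rw [A.mul_add_left a b z]; exact add_mem p1 p2
    · intro a b z ha hb hz p1 p2; rw [A.mul_add_right a b z]; exact add_mem p1 p2
    · intro r a b ha hb p; rw [A.mul_smul_left r a b]; exact Submodule.smul_mem _ _ p
    · intro r a b ha hb p; rw [A.mul_smul_right r a b]; exact Submodule.smul_mem _ _ p
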